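/- Let T ∈ ℝ^{d×d×d} be an order-3 tensor admitting a decomposition T = Σ_{i=1}^r u_i ⊗ v_i ⊗ w_i with u_i, v_i, w_i ∈ ℝ^d. Then for every index subset Ω ⊆ [d]³ and every t ∈ ℝ, ‖𝒫_Ω(T) − t·T‖ ≤ ‖𝒫_Ω(𝟙^{⊗3}) − t·𝟙^{⊗3}‖ · Σ_{i=1}^r ‖u_i‖_∞ ‖v_i‖_∞ ‖w_i‖_∞, where 𝟙 ∈ ℝ^d is the all-one vector. -/

import Mathlib

/-!
Entrywise, `𝒫_Ω(T) - c • T = M ∘ T` with `M = 𝒫_Ω(𝟙^{⊗3}) - c • 𝟙^{⊗3}`. Expanding `T` turns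
`⟨M ∘ T, x ⊗ y ⊗ z⟩` into `∑ᵢ ⟨M, (uᵢ ∘ x) ⊗ (vᵢ ∘ y) ⊗ (wᵢ ∘ z)⟩`, where `∘` is the entrywise
product. By homogeneity each term is at most `‖M‖ ‖uᵢ ∘ x‖₂ ‖vᵢ ∘ y‖₂ ‖wᵢ ∘ z‖₂`, and
`‖uᵢ ∘ x‖₂ ≤ ‖uᵢ‖_∞ ‖x‖₂`.
-/

noncomputable section

open MeasureTheory ProbabilityTheory Matrix

namespace TC

/-- Index triples for a `d × d × d` tensor. -/
abbrev Idx (d : ℕ) := Fin d × Fin d × Fin d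

/-- Sort a triple of indices into nondecreasing order `(min, median, max)`. -/
def sort3 {d : ℕ} (t : Idx d) : Idx d :=
  (min t.1 (min t.2.1 t.2.2),
    max (min t.1 t.2.1) (min (max t.1 t.2.1) t.2.2),
    max t.1 (max t.2.1 t.2.2))

/-- A symmetric tensor determined by its values on sorted triples. -/
def symEntry {d : ℕ} {α : Type*} (e : Idx d → α) (t : Idx d) : α := e (sort3 t)

/-- The CP tensor `∑_l u_l ⊗ u_l ⊗ u_l` built from the factor matrix `W`
(the `l`-th column of `W` is the factor `u_l`). -/
def cpTensor {d r : ℕ} (W : Matrix (Fin d) (Fin r) ℝ) (t : Idx d) : ℝ :=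
  ∑ l : Fin r, W t.1 l * W t.2.1 l * W t.2.2 l

/-- Euclidean norm of a vector. -/
def norm2 {n : Type*} [Fintype n] (u : n → ℝ) : ℝ := Real.sqrt (∑ i, u i ^ 2)

/-- Sup-norm of a vector. -/
def normInf {n : Type*} [Fintype n] (u : n → ℝ) : ℝ := ⨆ i, |u i|

/-- The `l`-th column of a factor matrix, i.e. the factor `u_l`. -/
def colU {d r : ℕ} (U : Matrix (Fin d) (Fin r) ℝ) (l : Fin r) : Fin d → ℝ := fun i => U i l

/-- `λ⋆_max = max_l ‖u_l⋆‖₂³`. -/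
def lamMax {d r : ℕ} (U : Matrix (Fin d) (Fin r) ℝ) : ℝ := ⨆ l : Fin r, norm2 (colU U l) ^ 3

/-- `λ⋆_min = min_l ‖u_l⋆‖₂³`. -/
def lamMin {d r : ℕ} (U : Matrix (Fin d) (Fin r) ℝ) : ℝ := ⨅ l : Fin r, norm2 (colU U l) ^ 3

/-- `μ`-incoherence of the factor matrix `U`. -/
def Incoherent {d r : ℕ} (μ : ℝ) (U : Matrix (Fin d) (Fin r) ℝ) : Prop :=
  (⨆ t : Idx d, |cpTensor U t|) ≤
      Real.sqrt (μ / (d : ℝ) ^ 3) * Real.sqrt (∑ t : Idx d, cpTensor U t ^ 2) ∧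
  (∀ l, normInf (colU U l) ≤ Real.sqrt (μ / (d : ℝ)) * norm2 (colU U l)) ∧
  ∀ l j, l ≠ j →
    |∑ i, U i l * U i j| ≤ Real.sqrt (μ / (d : ℝ)) * (norm2 (colU U l) * norm2 (colU U j))

/-- The lifted `d² × r` matrix `Ũ`, with `((i,j), l)` entry `u_{l,i} u_{l,j}`. -/
def lift {d r : ℕ} (U : Matrix (Fin d) (Fin r) ℝ) : Matrix (Fin d × Fin d) (Fin r) ℝ :=
  Matrix.of fun ij l => U ij.1 l * U ij.2 l

/-- `Ũᵀ Ũ`. -/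
def gram {d r : ℕ} (U : Matrix (Fin d) (Fin r) ℝ) : Matrix (Fin r) (Fin r) ℝ :=
  (lift U)ᵀ * lift U

/-- The diagonal matrix `D_k⋆` of noise variances in the `k`-th slice. -/
def Dstar {d : ℕ} (σv : Fin d → Fin d → Fin d → ℝ) (k : Fin d) :
    Matrix (Fin d × Fin d) (Fin d × Fin d) ℝ :=
  Matrix.diagonal fun ij => σv ij.1 ij.2 k ^ 2

/-- The covariance matrix `Σ_k⋆ = (2/p) (ŨᵀŨ)⁻¹ Ũᵀ D_k⋆ Ũ (ŨᵀŨ)⁻¹`. -/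
def SigmaStar {d r : ℕ} (U : Matrix (Fin d) (Fin r) ℝ) (p : ℝ)
    (σv : Fin d → Fin d → Fin d → ℝ) (k : Fin d) : Matrix (Fin r) (Fin r) ℝ :=
  (2 / p) • ((gram U)⁻¹ * (lift U)ᵀ * Dstar σv k * lift U * (gram U)⁻¹)

/-- Quadratic form `Ũ_{(i,j),:} Σ_m⋆ (Ũ_{(i,j),:})ᵀ`. -/
def qf {d r : ℕ} (U : Matrix (Fin d) (Fin r) ℝ) (p : ℝ)
    (σv : Fin d → Fin d → Fin d → ℝ) (m i j : Fin d) : ℝ :=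
  ∑ a : Fin r, ∑ b : Fin r, lift U (i, j) a * SigmaStar U p σv m a b * lift U (i, j) b

/-- The variance parameters `v⋆_{i,j,k}` (symmetric in the indices). -/
def vstar {d r : ℕ} (U : Matrix (Fin d) (Fin r) ℝ) (p : ℝ)
    (σv : Fin d → Fin d → Fin d → ℝ) (i j k : Fin d) : ℝ :=
  if i = j ∧ j = k then 9 * qf U p σv i i i
  else if i = j then 4 * qf U p σv i i k + qf U p σv k i i
  else if i = k then 4 * qf U p σv i i j + qf U p σv j i i
  else if j = k then 4 * qf U p σv j j i + qf U p σv i j j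
  else qf U p σv i j k + qf U p σv j i k + qf U p σv k i j

/-- Bernoulli measure on `Bool` with success probability `p` (clipped at 1). -/
def bern (p : ℝ) : Measure Bool :=
  (PMF.bernoulli (min (Real.toNNReal p) 1) (min_le_right _ _)).toMeasure

/-- The random symmetric sampling pattern: independent Bernoulli(p) indicators for the
sorted triples, symmetrized through `symEntry`/`sort3`. -/
def sampleMeasure (d : ℕ) (p : ℝ) : Measure (Idx d → Bool) :=
  Measure.pi fun _ => bern p

/-- i.i.d. Gaussian noise with variance `v` on the sorted triples, symmetrized through
`symEntry`/`sort3`. -/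
def noiseMeasure (d : ℕ) (v : NNReal) : Measure (Idx d → ℝ) :=
  Measure.pi fun _ => gaussianReal 0 v

/-- The indicator `χ_{i,j,k}` of the (symmetrized) sampling set. -/
def chi {d : ℕ} (S : Idx d → Bool) (t : Idx d) : ℝ := if symEntry S t then 1 else 0

/-- The observed (masked) tensor `𝒫_Ω(W♯ + E)` for ground truth `W` and noise `e`. -/
def obs {d r : ℕ} (S : Idx d → Bool) (W : Matrix (Fin d) (Fin r) ℝ) (e : Idx d → ℝ) :
    Idx d → ℝ :=
  fun t => if symEntry S t then cpTensor W t + symEntry e t else 0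

/-- The sorted triples `i ≤ j ≤ k`. -/
def sortedTriples (d : ℕ) : Finset (Idx d) :=
  Finset.univ.filter fun t => t.1 ≤ t.2.1 ∧ t.2.1 ≤ t.2.2

/-- The vector `h_{i,j,k} ∈ ℝ^{dr}` with `(l, s)` entry
`u⋆_{l,j}u⋆_{l,k}·1{i=s} + u⋆_{l,i}u⋆_{l,k}·1{j=s} + u⋆_{l,i}u⋆_{l,j}·1{k=s}`. -/
def hvec {d r : ℕ} (U : Matrix (Fin d) (Fin r) ℝ) (t : Idx d) : Fin r × Fin d → ℝ :=
  fun ls =>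
    (if t.1 = ls.2 then U t.2.1 ls.1 * U t.2.2 ls.1 else 0) +
      (if t.2.1 = ls.2 then U t.1 ls.1 * U t.2.2 ls.1 else 0) +
      (if t.2.2 = ls.2 then U t.1 ls.1 * U t.2.1 ls.1 else 0)

/-- Spectral norm of a square matrix: `sup_{‖x‖₂ ≤ 1} ‖A x‖₂`. -/
def specNorm {n : Type*} [Fintype n] (A : Matrix n n ℝ) : ℝ :=
  ⨆ x : { x : n → ℝ // ∑ i, x i ^ 2 ≤ 1 }, Real.sqrt (∑ i, A.mulVec x.1 i ^ 2)

/-- `V⋆ = Ũ (ŨᵀŨ)⁻¹`. -/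
def Vmat {d r : ℕ} (U : Matrix (Fin d) (Fin r) ℝ) : Matrix (Fin d × Fin d) (Fin r) ℝ :=
  lift U * (gram U)⁻¹

/-- `P⋆ = Ũ (ŨᵀŨ)⁻¹ Ũᵀ`. -/
def Pmat {d r : ℕ} (U : Matrix (Fin d) (Fin r) ℝ) :
    Matrix (Fin d × Fin d) (Fin d × Fin d) ℝ :=
  lift U * (gram U)⁻¹ * (lift U)ᵀ

/-- The random matrix `S_m⋆` built from the sampling pattern `S`. -/
def SstarMat {d r : ℕ} (U : Matrix (Fin d) (Fin r) ℝ) (p : ℝ)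
    (σv : Fin d → Fin d → Fin d → ℝ) (S : Idx d → Bool) (m : Fin d) :
    Matrix (Fin r) (Fin r) ℝ :=
  Matrix.of fun a b =>
    2 / p ^ 2 * ∑ i : Fin d, ∑ j : Fin d,
      σv i j m ^ 2 * chi S (i, j, m) * (∑ l, (gram U)⁻¹ a l * lift U (i, j) l) *
        (∑ l, (gram U)⁻¹ b l * lift U (i, j) l)

/-- The row vector `z_{i,j,k} = p⁻¹ E_{i,j,k} χ_{i,j,k} Ũ_{(i,j),:} (ŨᵀŨ)⁻¹`, as a function of a
joint sampling/noise outcome `ω`. -/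
def zEntry {d r : ℕ} (U : Matrix (Fin d) (Fin r) ℝ) (p : ℝ)
    (ω : (Idx d → Bool) × (Idx d → ℝ)) (i j k : Fin d) : Fin r → ℝ :=
  fun l => p⁻¹ * symEntry ω.2 (i, j, k) * chi ω.1 (i, j, k) *
    ∑ a, lift U (i, j) a * (gram U)⁻¹ a l

/-- The random matrix `X` with rows `X_{m,:} = ∑_{i,j} z_{i,j,m}`. -/
def Xmat {d r : ℕ} (U : Matrix (Fin d) (Fin r) ℝ) (p : ℝ)
    (ω : (Idx d → Bool) × (Idx d → ℝ)) : Fin d → Fin r → ℝ :=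
  fun m l => ∑ i : Fin d, ∑ j : Fin d, zEntry U p ω i j m l

/-- The random matrix `Z` with rows `Z_{k,:} = √2 ∑_i z_{i,i,k} + 2 ∑_{i<j} z_{i,j,k}`. -/
def Zmat {d r : ℕ} (U : Matrix (Fin d) (Fin r) ℝ) (p : ℝ)
    (ω : (Idx d → Bool) × (Idx d → ℝ)) : Fin d → Fin r → ℝ :=
  fun k l =>
    Real.sqrt 2 * ∑ i : Fin d, zEntry U p ω i i k l +
      2 * ∑ i : Fin d, ∑ j : Fin d, if i < j then zEntry U p ω i j k l else 0

/-- Standard normal CDF `Φ`. -/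
def stdGaussCDF (τ : ℝ) : ℝ := (gaussianReal 0 1 (Set.Iic τ)).toReal

/-- Update the `(s, l)` entry of a matrix to the value `x`. -/
def updEntry {d r : ℕ} (U : Matrix (Fin d) (Fin r) ℝ) (s : Fin d) (l : Fin r) (x : ℝ) :
    Matrix (Fin d) (Fin r) ℝ :=
  Matrix.of fun i l' => if i = s ∧ l' = l then x else U i l'

/-- The score vector `g = σ⁻² ∑_{i≤j≤k} χ_{ijk} E_{ijk} h_{ijk}`. -/
def gvec {d r : ℕ} (U : Matrix (Fin d) (Fin r) ℝ) (σ : ℝ) (S : Finset (Idx d))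
    (e : Idx d → ℝ) : Fin r × Fin d → ℝ :=
  fun ls => (σ ^ 2)⁻¹ *
    ∑ t ∈ sortedTriples d, (if t ∈ S then (1 : ℝ) else 0) * symEntry e t * hvec U t ls

/-- The covariance matrix `S_l⋆` of the `l`-th column of the Gaussian part of the error,
for product-form noise levels `σ_{ijk} = s_i s_j s_k`. -/
def SlMat {d r : ℕ} (U : Matrix (Fin d) (Fin r) ℝ) (p : ℝ) (s : Fin d → ℝ) (l : Fin r) :
    Matrix (Fin d) (Fin d) ℝ :=
  Matrix.of fun i j =>
    if i = j then
      2 * ∑ k₁ : Fin d, ∑ k₂ : Fin d, p⁻¹ * (s i * s k₁ * s k₂) ^ 2 * Vmat U (k₁, k₂) l ^ 2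
    else
      4 * (∑ k : Fin d, p⁻¹ * (s i * s j * s k) ^ 2 * Vmat U (i, k) l * Vmat U (j, k) l) -
        (4 - 2 * Real.sqrt 2) * p⁻¹ * (s i * s i * s j) ^ 2 * Vmat U (i, i) l * Vmat U (i, j) l -
        (4 - 2 * Real.sqrt 2) * p⁻¹ * (s i * s j * s j) ^ 2 * Vmat U (j, j) l * Vmat U (i, j) l

/-- Spectral norm of an order-3 tensor: `sup_{‖x‖=‖y‖=‖z‖=1} ⟨T, x⊗y⊗z⟩`. -/
def tSpec {d : ℕ} (T : Idx d → ℝ) : ℝ :=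
  ⨆ v : { v : (Fin d → ℝ) × (Fin d → ℝ) × (Fin d → ℝ) //
      norm2 v.1 = 1 ∧ norm2 v.2.1 = 1 ∧ norm2 v.2.2 = 1 },
    ∑ t : Idx d, T t * v.1.1 t.1 * v.1.2.1 t.2.1 * v.1.2.2 t.2.2

section Norms

variable {n : Type*} [Fintype n]

lemma norm2_nonneg (x : n → ℝ) : 0 ≤ norm2 x := Real.sqrt_nonneg _

lemma abs_le_norm2 (x : n → ℝ) (i : n) : |x i| ≤ norm2 x :=
  Real.abs_le_sqrt <| Finset.single_le_sum (fun j _ => sq_nonneg (x j)) (Finset.mem_univ i)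

lemma norm2_eq_zero_iff {x : n → ℝ} : norm2 x = 0 ↔ x = 0 := by
  rw [norm2, Real.sqrt_eq_zero (Finset.sum_nonneg fun i _ => sq_nonneg (x i)),
    Finset.sum_eq_zero_iff_of_nonneg fun i _ => sq_nonneg (x i), funext_iff]
  simp

lemma norm2_smul (a : ℝ) (x : n → ℝ) : norm2 (a • x) = |a| * norm2 x := by
  simp only [norm2, Pi.smul_apply, smul_eq_mul, mul_pow, ← Finset.mul_sum]
  rw [Real.sqrt_mul (sq_nonneg a), Real.sqrt_sq_eq_abs]

lemma norm2_neg (x : n → ℝ) : norm2 (-x) = norm2 x := by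
  simpa using norm2_smul (-1) x

lemma normInf_nonneg (u : n → ℝ) : 0 ≤ normInf u :=
  Real.iSup_nonneg fun i => abs_nonneg (u i)

lemma abs_le_normInf (u : n → ℝ) (i : n) : |u i| ≤ normInf u :=
  le_ciSup (Set.finite_range fun j => |u j|).bddAbove i

lemma norm2_mul_le (u x : n → ℝ) : norm2 (u * x) ≤ normInf u * norm2 x := by
  rw [← abs_of_nonneg (normInf_nonneg u), ← norm2_smul]
  refine Real.sqrt_le_sqrt (Finset.sum_le_sum fun i _ => ?_)
  simp only [Pi.mul_apply, Pi.smul_apply, smul_eq_mul, mul_pow]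
  refine mul_le_mul_of_nonneg_right (sq_le_sq.mpr ?_) (sq_nonneg _)
  rw [abs_of_nonneg (normInf_nonneg u)]
  exact abs_le_normInf u i

end Norms

def triForm {ι κ μ : Type*} [Fintype ι] [Fintype κ] [Fintype μ] (M : ι × κ × μ → ℝ)
    (x : ι → ℝ) (y : κ → ℝ) (z : μ → ℝ) : ℝ :=
  ∑ t, M t * x t.1 * y t.2.1 * z t.2.2

section TriForm

variable {ι κ μ : Type*} [Fintype ι] [Fintype κ] [Fintype μ] (M : ι × κ × μ → ℝ)

lemma triForm_smul (a b c : ℝ) (x : ι → ℝ) (y : κ → ℝ) (z : μ → ℝ) :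
    triForm M (a • x) (b • y) (c • z) = a * b * c * triForm M x y z := by
  simp only [triForm, Finset.mul_sum, Pi.smul_apply, smul_eq_mul]
  exact Finset.sum_congr rfl fun t _ => by ring

lemma triForm_neg_left (x : ι → ℝ) (y : κ → ℝ) (z : μ → ℝ) :
    triForm M (-x) y z = -triForm M x y z := by
  simpa using triForm_smul M (-1) 1 1 x y z

lemma triForm_le_sum_abs_mul (x : ι → ℝ) (y : κ → ℝ) (z : μ → ℝ) :
    triForm M x y z ≤ (∑ t, |M t|) * (norm2 x * norm2 y * norm2 z) := by
  rw [triForm, Finset.sum_mul]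
  refine Finset.sum_le_sum fun t _ => ?_
  calc M t * x t.1 * y t.2.1 * z t.2.2 ≤ |M t| * (|x t.1| * |y t.2.1| * |z t.2.2|) := by
        rw [← abs_mul, ← abs_mul, ← abs_mul, ← mul_assoc, ← mul_assoc]
        exact le_abs_self _
    _ ≤ |M t| * (norm2 x * norm2 y * norm2 z) := by
        refine mul_le_mul_of_nonneg_left ?_ (abs_nonneg _)
        exact mul_le_mul (mul_le_mul (abs_le_norm2 x _) (abs_le_norm2 y _) (abs_nonneg _)
          (norm2_nonneg x)) (abs_le_norm2 z _) (abs_nonneg _)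
          (mul_nonneg (norm2_nonneg x) (norm2_nonneg y))

lemma triForm_mul_cp {r : ℕ} (u : Fin r → ι → ℝ) (v : Fin r → κ → ℝ) (w : Fin r → μ → ℝ)
    (x : ι → ℝ) (y : κ → ℝ) (z : μ → ℝ) :
    triForm (fun t => M t * ∑ i, u i t.1 * v i t.2.1 * w i t.2.2) x y z =
      ∑ i, triForm M (u i * x) (v i * y) (w i * z) := by
  simp only [triForm, Finset.mul_sum, Finset.sum_mul, Pi.mul_apply]
  rw [Finset.sum_comm]
  exact Finset.sum_congr rfl fun i _ => Finset.sum_congr rfl fun t _ => by ring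

end TriForm

abbrev UnitTriple (d : ℕ) :=
  { v : (Fin d → ℝ) × (Fin d → ℝ) × (Fin d → ℝ) //
    norm2 v.1 = 1 ∧ norm2 v.2.1 = 1 ∧ norm2 v.2.2 = 1 }

section SpectralNorm

variable {d : ℕ} (M : Idx d → ℝ)

lemma triForm_le_tSpec {x y z : Fin d → ℝ} (hx : norm2 x = 1) (hy : norm2 y = 1)
    (hz : norm2 z = 1) : triForm M x y z ≤ tSpec M := by
  have hbdd : BddAbove
      (Set.range fun v : UnitTriple d => triForm M v.1.1 v.1.2.1 v.1.2.2) := by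
    refine ⟨∑ t, |M t|, ?_⟩
    rintro _ ⟨⟨⟨a, b, c⟩, ha, hb, hc⟩, rfl⟩
    simpa [ha, hb, hc] using triForm_le_sum_abs_mul M a b c
  exact le_ciSup hbdd ⟨(x, y, z), hx, hy, hz⟩

lemma tSpec_le {C : ℝ} (hC : 0 ≤ C) (h : ∀ x y z : Fin d → ℝ, norm2 x = 1 → norm2 y = 1 →
    norm2 z = 1 → triForm M x y z ≤ C) : tSpec M ≤ C :=
  Real.iSup_le (fun v => h _ _ _ v.2.1 v.2.2.1 v.2.2.2) hC

lemma tSpec_nonneg : 0 ≤ tSpec M := by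
  rcases isEmpty_or_nonempty (UnitTriple d) with _ | ⟨⟨⟨x, y, z⟩, hx, hy, hz⟩⟩
  · exact (Real.iSup_of_isEmpty _).ge
  · have hpos := triForm_le_tSpec M hx hy hz
    have hneg := triForm_le_tSpec M ((norm2_neg x).trans hx) hy hz
    rw [triForm_neg_left] at hneg
    linarith

lemma triForm_le_tSpec_mul (x y z : Fin d → ℝ) :
    triForm M x y z ≤ tSpec M * (norm2 x * norm2 y * norm2 z) := by
  by_cases h0 : x = 0 ∨ y = 0 ∨ z = 0
  · obtain rfl | rfl | rfl := h0 <;> simp [triForm, norm2]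
  simp only [not_or] at h0
  obtain ⟨hx, hy, hz⟩ := h0
  have hpos : ∀ {a : Fin d → ℝ}, a ≠ 0 → 0 < norm2 a := fun ha =>
    (norm2_nonneg _).lt_of_ne' (mt norm2_eq_zero_iff.mp ha)
  have hunit : ∀ {a : Fin d → ℝ}, a ≠ 0 → norm2 ((norm2 a)⁻¹ • a) = 1 := fun ha => by
    rw [norm2_smul, abs_inv, abs_of_pos (hpos ha), inv_mul_cancel₀ (hpos ha).ne']
  have key := triForm_le_tSpec M (hunit hx) (hunit hy) (hunit hz)
  rw [triForm_smul, ← mul_inv, ← mul_inv,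
    inv_mul_le_iff₀ (mul_pos (mul_pos (hpos hx) (hpos hy)) (hpos hz))] at key
  linarith

lemma triForm_mul_le_tSpec_mul (a b c x y z : Fin d → ℝ) :
    triForm M (a * x) (b * y) (c * z) ≤
      tSpec M * (normInf a * normInf b * normInf c) * (norm2 x * norm2 y * norm2 z) := by
  refine (triForm_le_tSpec_mul M _ _ _).trans ?_
  rw [mul_assoc (tSpec M)]
  refine mul_le_mul_of_nonneg_left ?_ (tSpec_nonneg M)
  calc norm2 (a * x) * norm2 (b * y) * norm2 (c * z)
      ≤ (normInf a * norm2 x) * (normInf b * norm2 y) * (normInf c * norm2 z) :=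
        mul_le_mul (mul_le_mul (norm2_mul_le a x) (norm2_mul_le b y) (norm2_nonneg _)
          (mul_nonneg (normInf_nonneg a) (norm2_nonneg x))) (norm2_mul_le c z) (norm2_nonneg _)
          (mul_nonneg (mul_nonneg (normInf_nonneg a) (norm2_nonneg x))
            (mul_nonneg (normInf_nonneg b) (norm2_nonneg y)))
    _ = normInf a * normInf b * normInf c * (norm2 x * norm2 y * norm2 z) := by ring

end SpectralNorm

/-- tensor spectral-norm bound for masked low-rank tensors. -/
theorem statement16 {d r : ℕ} (u v w : Fin r → Fin d → ℝ) (T : Idx d → ℝ)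
    (hT : ∀ t : Idx d, T t = ∑ i : Fin r, u i t.1 * v i t.2.1 * w i t.2.2)
    (S : Finset (Idx d)) (c : ℝ) :
    tSpec (fun t => (if t ∈ S then T t else 0) - c * T t) ≤
      tSpec (fun t => (if t ∈ S then (1 : ℝ) else 0) - c) *
        ∑ i : Fin r, normInf (u i) * normInf (v i) * normInf (w i) := by
  set M : Idx d → ℝ := fun t => (if t ∈ S then (1 : ℝ) else 0) - c
  have hmask : (fun t => (if t ∈ S then T t else 0) - c * T t) =
      fun t => M t * ∑ i, u i t.1 * v i t.2.1 * w i t.2.2 := by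
    funext t
    rw [← hT t]
    simp only [M]
    split_ifs <;> ring
  have hweights : 0 ≤ ∑ i, normInf (u i) * normInf (v i) * normInf (w i) :=
    Finset.sum_nonneg fun i _ =>
      mul_nonneg (mul_nonneg (normInf_nonneg _) (normInf_nonneg _)) (normInf_nonneg _)
  rw [hmask]
  refine tSpec_le _ (mul_nonneg (tSpec_nonneg M) hweights) fun x y z hx hy hz => ?_
  rw [triForm_mul_cp, Finset.mul_sum]
  exact Finset.sum_le_sum fun i _ => by
    simpa [hx, hy, hz] using triForm_mul_le_tSpec_mul M (u i) (v i) (w i) x y z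

end TC
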